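/- Consider the 2-periodic system over 𝔽₂² with A(0) = [[1,1],[1,0]] and A(1) = [[1,0],[1,1]]. Its monodromy matrix A(1)A(0) = [[1,1],[0,1]] has no square root over any extension of 𝔽₂, hence the system admits no Floquet transform over any field of characteristic 2. -/

import Mathlib

/-!
If `P` is a Floquet transform with `P (k + 1) * A k * (P k)⁻¹ = Atil` and `P N = P 0`, then the
products telescope and `(P 0)⁻¹ * Atil * P 0` is an `N`-th root of the monodromy matrix.
In characteristic two the Jordan block `J = !![1, 1; 0, 1]` has no square root: a square root `B`
commutes with `B ^ 2 = J`, which forces `B 0 0 = B 1 1`, and then the `(0, 1)` entry of `B ^ 2`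
is `2 * B 0 0 * B 0 1 = 0`.
-/

open Matrix

/-- For an `N`-periodic system, `stateTransition A N` is its monodromy matrix. -/
def stateTransition {n R : Type*} [Fintype n] [DecidableEq n] [CommRing R]
    (A : ℕ → Matrix n n R) : ℕ → Matrix n n R
  | 0 => 1
  | m + 1 => A m * stateTransition A m

section Floquet

variable {n R : Type*} [Fintype n] [DecidableEq n] [CommRing R]
  {A P : ℕ → Matrix n n R} {Atil : Matrix n n R}

theorem pow_eq_mul_stateTransition_mul_inv (hP : ∀ k, IsUnit (P k))
    (hA : ∀ k, Atil = P (k + 1) * A k * (P k)⁻¹) (m : ℕ) :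
    Atil ^ m = P m * stateTransition A m * (P 0)⁻¹ := by
  induction m with
  | zero =>
    rw [pow_zero, stateTransition, Matrix.mul_one,
      Matrix.mul_nonsing_inv _ ((isUnit_iff_isUnit_det _).mp (hP 0))]
  | succ m ih =>
    have hPm : (P m)⁻¹ * P m = 1 := nonsing_inv_mul _ ((isUnit_iff_isUnit_det _).mp (hP m))
    calc Atil ^ (m + 1) = P (m + 1) * A m * ((P m)⁻¹ * P m) * stateTransition A m * (P 0)⁻¹ := by
          rw [pow_succ', ih, hA m]; simp only [Matrix.mul_assoc]
      _ = P (m + 1) * stateTransition A (m + 1) * (P 0)⁻¹ := by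
          rw [hPm, Matrix.mul_one, stateTransition]; simp only [Matrix.mul_assoc]

theorem exists_pow_eq_stateTransition_of_floquet {N : ℕ} (hP : ∀ k, IsUnit (P k))
    (hA : ∀ k, Atil = P (k + 1) * A k * (P k)⁻¹) (hN : P N = P 0) :
    ∃ B : Matrix n n R, B ^ N = stateTransition A N := by
  obtain ⟨u, hu⟩ := hP 0
  refine ⟨(P 0)⁻¹ * Atil * P 0, ?_⟩
  have hinv : ((u⁻¹ : (Matrix n n R)ˣ) : Matrix n n R) = (P 0)⁻¹ := by
    rw [coe_units_inv, hu]
  have hdet := (isUnit_iff_isUnit_det _).mp (hP 0)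
  rw [← hinv, ← hu, Units.conj_pow', hinv, hu, pow_eq_mul_stateTransition_mul_inv hP hA, hN,
    Matrix.mul_assoc, nonsing_inv_mul_cancel_right _ _ hdet, nonsing_inv_mul_cancel_left _ _ hdet]

end Floquet

theorem not_exists_sq_eq_unipotent {R : Type*} [CommRing R] [CharP R 2] :
    ¬ ∃ B : Matrix (Fin 2) (Fin 2) R, B ^ 2 = !![1, 1; 0, 1] := by
  rintro ⟨B, hB⟩
  have : Nontrivial R := CharP.nontrivial_of_char_ne_one (by norm_num : 2 ≠ 1)
  have hcomm : B * !![1, 1; 0, 1] = !![1, 1; 0, 1] * B := by rw [← hB, ← pow_succ, ← pow_succ']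
  have hdiag : B 0 0 = B 1 1 := by
    have h := congrFun (congrFun hcomm 0) 1
    simp only [mul_apply, Fin.sum_univ_two, of_apply, cons_val', cons_val_zero, cons_val_one,
      cons_val_fin_one, mul_one, one_mul] at h
    linear_combination h
  have h01 := congrFun (congrFun hB 0) 1
  simp only [sq, mul_apply, Fin.sum_univ_two, of_apply, cons_val', cons_val_zero, cons_val_one,
    cons_val_fin_one] at h01
  exact zero_ne_one <| by
    linear_combination h01 - B 0 1 * hdiag - B 0 1 * B 1 1 * CharTwo.two_eq_zero (R := R)

theorem counterexample_no_floquet_char_two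
    (K : Type*) [Field K] [CharP K 2] :
    (!![(1 : K), 0; 1, 1] * !![(1 : K), 1; 1, 0] = !![1, 1; 0, 1]) ∧
    (¬ ∃ B : Matrix (Fin 2) (Fin 2) K, B ^ 2 = !![(1 : K), 0; 1, 1] * !![(1 : K), 1; 1, 0]) ∧
    (¬ ∃ (P : ℕ → Matrix (Fin 2) (Fin 2) K) (Atil : Matrix (Fin 2) (Fin 2) K),
        (∀ k, IsUnit (P k)) ∧ (∀ k, P (k + 2) = P k) ∧
        (∀ k, Atil = P (k + 1) *
          (if k % 2 = 0 then !![(1 : K), 1; 1, 0] else !![(1 : K), 0; 1, 1]) * (P k)⁻¹)) := by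
  have hmonodromy : !![(1 : K), 0; 1, 1] * !![(1 : K), 1; 1, 0] = !![1, 1; 0, 1] := by
    simp [one_add_one_eq_two, CharTwo.two_eq_zero]
  have hno_sqrt := hmonodromy ▸ not_exists_sq_eq_unipotent (R := K)
  refine ⟨hmonodromy, hno_sqrt, ?_⟩
  rintro ⟨P, Atil, hP, hper, hA⟩
  exact hno_sqrt <| by
    simpa [stateTransition] using exists_pow_eq_stateTransition_of_floquet hP hA (hper 0)
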